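/- arXiv:2006.04957 — 9 statements merged into one kernel-verified Lean document; each statement's English description precedes it below -/
import Mathlib

section
/- Fix positive integers k and d and a permutation σ ∈ S_k. There exists a single-variable polynomial p with rational coefficients such that for every integer n ≥ 2dk, the sum over all π ∈ S_n of N_σ(π)^d equals n! · p(n). (Equivalently, the d-th moment of N_σ on a uniformly random permutation of S_n is a polynomial in n for n ≥ 2dk.) -/
/-!
Formalization of statements from "Stable characters from permutation patterns"
by C. Gaetz and C. Ryba.
-/

open scoped Classical

noncomputable section

/-- A word `I` (with values in a linear order `M`) is `σ`-sorted:
`I a < I b` if and only if `σ a < σ b`. -/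
def IsSorted {k : ℕ} {M : Type*} [LinearOrder M] (σ : Fin k → Fin k) (I : Fin k → M) : Prop :=
  ∀ a b : Fin k, I a < I b ↔ σ a < σ b

/-- `N_σ(g)`: the number of strictly increasing words `I : Fin k → Fin n` such that
`g ∘ I` is `σ`-sorted, i.e. the number of occurrences of the pattern `σ` in `g`. -/
def patCount (k n : ℕ) (σ : Fin k → Fin k) (g : Equiv.Perm (Fin n)) : ℕ :=
  Nat.card {I : Fin k → Fin n // StrictMono I ∧ IsSorted σ (⇑g ∘ I)}

/-- `m_i(g)`: the number of cycles of length `i` in the cycle decomposition of `g`,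
where fixed points count as cycles of length 1. -/
def cycleCount {n : ℕ} (g : Equiv.Perm (Fin n)) (i : ℕ) : ℕ :=
  if i = 1 then Nat.card {x : Fin n // g x = x} else Multiset.count i g.cycleType

/-- `W k n`: the space of `ℂ`-valued functions on words, a model of the `k`-th tensor power
of the permutation representation of `S_n`. -/
abbrev W (k n : ℕ) := (Fin k → Fin n) → ℂ

/-- The labelling `ℓ_{J,I}` of `Fin k ⊕ Fin k` determined by the words `J` and `I`:
unprimed vertices (`inl`) get labels from `J`, primed vertices (`inr`) from `I`. -/
def label {k n : ℕ} (J I : Fin k → Fin n) : Fin k ⊕ Fin k → Fin n := Sum.elim J I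

/-- `C_P(J, I)`: equal to `1` if the labelling `ℓ_{J,I}` is constant on every part of the
set partition `P` (i.e. every part is monochromatic), and `0` otherwise. -/
def CP {k n : ℕ} (P : Setoid (Fin k ⊕ Fin k)) (J I : Fin k → Fin n) : ℂ :=
  if ∀ a b, P.r a b → label J I a = label J I b then 1 else 0

/-- `C'_P(J, I)`: equal to `1` if the labelling `ℓ_{J,I}` is constant on every part of `P`
and takes distinct values on distinct parts of `P`, and `0` otherwise. -/
def CP' {k n : ℕ} (P : Setoid (Fin k ⊕ Fin k)) (J I : Fin k → Fin n) : ℂ :=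
  if (∀ a b, P.r a b → label J I a = label J I b) ∧
      (∀ a b, ¬ P.r a b → label J I a ≠ label J I b) then 1 else 0

/-- The operator `T_P : W_{k,n} → W_{k,n}`, `(T_P f)(J) = Σ_I C_P(J,I) f(I)`. -/
def TP (k n : ℕ) (P : Setoid (Fin k ⊕ Fin k)) : W k n →ₗ[ℂ] W k n :=
  Matrix.mulVecLin (Matrix.of fun J I => CP P J I)

/-- The operator `T'_P : W_{k,n} → W_{k,n}`, `(T'_P f)(J) = Σ_I C'_P(J,I) f(I)`. -/
def TP' (k n : ℕ) (P : Setoid (Fin k ⊕ Fin k)) : W k n →ₗ[ℂ] W k n :=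
  Matrix.mulVecLin (Matrix.of fun J I => CP' P J I)

/-- The action `ρ(g)` of `S_n` on `W k n`: `(ρ(g) f)(I) = f(g⁻¹ ∘ I)`. -/
def rho (k n : ℕ) (g : Equiv.Perm (Fin n)) : W k n →ₗ[ℂ] W k n where
  toFun f := fun I => f (⇑g⁻¹ ∘ I)
  map_add' _ _ := rfl
  map_smul' _ _ := rfl

/-- The map `E_σ : ℂ → W_{k,n}` sending `1` to the sum of `v_I` over `σ`-sorted words `I`. -/
def Esig (k n : ℕ) (σ : Fin k → Fin k) : ℂ →ₗ[ℂ] W k n where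
  toFun c := fun I => if IsSorted σ I then c else 0
  map_add' a b := by
    funext I; by_cases h : IsSorted σ I <;> simp [h]
  map_smul' a b := by
    funext I; by_cases h : IsSorted σ I <;> simp [h]

/-- The transpose map `E_σ^T : W_{k,n} → ℂ`, `f ↦ Σ_{I σ-sorted} f(I)`. -/
def EsigT (k n : ℕ) (σ : Fin k → Fin k) : W k n →ₗ[ℂ] ℂ where
  toFun f := ∑ I ∈ Finset.univ.filter (fun I : Fin k → Fin n => IsSorted σ I), f I
  map_add' f g := Finset.sum_add_distrib
  map_smul' c f := by simp [Finset.mul_sum]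

/-- There are finitely many set partitions (equivalence relations) on a finite type. -/
noncomputable instance {α : Type*} [Finite α] : Fintype (Setoid α) := by
  have : Finite (Setoid α) :=
    Finite.of_injective (fun s : Setoid α => s.r)
      (fun s t h => by cases s; cases t; cases h; rfl)
  exact Fintype.ofFinite _


/-! ### Auxiliary machinery for the proof of `pattern_moment_polynomial_in_n` -/

namespace GRAux
open Finset

variable {k d s n : ℕ}

lemma isSorted_comp_strictMono {σ : Fin k → Fin k} {m : Fin s → Fin n} (hm : StrictMono m)
    (w : Fin k → Fin s) : IsSorted σ (m ∘ w) ↔ IsSorted σ w := by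
  unfold IsSorted
  constructor <;> intro h a b <;> have := h a b <;>
    simpa [Function.comp, hm.lt_iff_lt] using this

lemma exists_perm_comp {e h : Fin s → Fin n} (he : Function.Injective e)
    (hh : Function.Injective h) : ∃ π : Equiv.Perm (Fin n), ⇑π ∘ e = h := by
  let E : {x // x ∈ Set.range e} ≃ {x // x ∈ Set.range h} :=
    (Equiv.ofInjective e he).symm.trans (Equiv.ofInjective h hh)
  refine ⟨E.extendSubtype, funext fun a => ?_⟩
  have h1 : E.extendSubtype (e a) = E ⟨e a, ⟨a, rfl⟩⟩ :=
    Equiv.extendSubtype_apply_of_mem E (e a) ⟨a, rfl⟩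
  simp only [Function.comp_apply, h1]
  show ((Equiv.ofInjective h hh) ((Equiv.ofInjective e he).symm ⟨e a, ⟨a, rfl⟩⟩) : Fin n) = h a
  have h2 : (Equiv.ofInjective e he).symm ⟨e a, ⟨a, rfl⟩⟩ = a := by
    simp [Equiv.ofInjective_symm_apply]
  rw [h2]
  simp [Equiv.ofInjective_apply]

/-- The finset of injective maps `Fin s → Fin n`. -/
def Injs (s n : ℕ) : Finset (Fin s → Fin n) := univ.filter Function.Injective

/-- The finset of strictly monotone maps `Fin s → Fin n`. -/
def SM (s n : ℕ) : Finset (Fin s → Fin n) := univ.filter StrictMono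

/-- The finset of "types": `d`-tuples of strictly monotone words covering `Fin s`. -/
def Types (k d s : ℕ) : Finset (Fin d → Fin k → Fin s) :=
  univ.filter (fun U => (∀ j, StrictMono (U j)) ∧ ∀ x, ∃ j a, U j a = x)

/-- The number of permutations `τ` of `Fin s` sorting all words of the tuple `U`. -/
def gcount (σ : Fin k → Fin k) (U : Fin d → Fin k → Fin s) : ℕ :=
  (univ.filter (fun τ : Equiv.Perm (Fin s) => ∀ j, IsSorted σ (⇑τ ∘ U j))).card

lemma card_Injs : (Injs s n).card = n.descFactorial s := by
  have h1 : (Injs s n).card = Fintype.card {f : Fin s → Fin n // Function.Injective f} := by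
    rw [Fintype.card_subtype]; rfl
  rw [h1, Fintype.card_congr (Equiv.subtypeInjectiveEquivEmbedding (Fin s) (Fin n)),
    Fintype.card_embedding_eq, Fintype.card_fin, Fintype.card_fin]

lemma sum_perm_comp {e : Fin s → Fin n} (he : Function.Injective e) (G : (Fin s → Fin n) → ℚ) :
    ∑ π : Equiv.Perm (Fin n), G (⇑π ∘ e)
      = ((n.factorial : ℚ) / (n.descFactorial s)) * ∑ h ∈ Injs s n, G h := by
  have hmaps : ∀ π : Equiv.Perm (Fin n), π ∈ (univ : Finset (Equiv.Perm (Fin n))) →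
      ⇑π ∘ e ∈ Injs s n := fun π _ => by
    simp only [Injs, mem_filter, mem_univ, true_and]
    exact π.injective.comp he
  obtain ⟨c, hc⟩ : ∃ c : ℕ, ∀ h ∈ Injs s n,
      (univ.filter (fun π : Equiv.Perm (Fin n) => ⇑π ∘ e = h)).card = c := by
    refine ⟨(univ.filter (fun π : Equiv.Perm (Fin n) => ⇑π ∘ e = e)).card, fun h hh => ?_⟩
    have hhinj : Function.Injective h := by
      simpa [Injs] using hh
    obtain ⟨π₀, hπ₀⟩ := exists_perm_comp he hhinj
    refine Finset.card_bij' (fun π _ => π₀⁻¹ * π) (fun π _ => π₀ * π) ?_ ?_ ?_ ?_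
    · intro π hπ
      simp only [mem_filter, mem_univ, true_and] at hπ ⊢
      funext a
      have : π (e a) = h a := congrFun hπ a
      simp [Equiv.Perm.mul_apply, this, ← hπ₀]
    · intro π hπ
      simp only [mem_filter, mem_univ, true_and] at hπ ⊢
      funext a
      have : π (e a) = e a := congrFun hπ a
      simp [Equiv.Perm.mul_apply, this, ← hπ₀]
    · intro π _; group
    · intro π _; group
  have hsplit : ∑ π : Equiv.Perm (Fin n), G (⇑π ∘ e)
      = ∑ h ∈ Injs s n, (c : ℚ) * G h := by
    rw [← Finset.sum_fiberwise_of_maps_to hmaps (fun π => G (⇑π ∘ e))]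
    refine Finset.sum_congr rfl fun h hh => ?_
    have : ∀ π ∈ univ.filter (fun π : Equiv.Perm (Fin n) => ⇑π ∘ e = h),
        G (⇑π ∘ e) = G h := fun π hπ => by
      simp only [mem_filter, mem_univ, true_and] at hπ; rw [hπ]
    rw [Finset.sum_congr rfl this, Finset.sum_const, hc h hh, nsmul_eq_mul]
  have hcount : c * n.descFactorial s = n.factorial := by
    have h1 : (univ : Finset (Equiv.Perm (Fin n))).card
        = ∑ h ∈ Injs s n, (univ.filter (fun π : Equiv.Perm (Fin n) => ⇑π ∘ e = h)).card :=
      Finset.card_eq_sum_card_fiberwise hmaps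
    rw [Finset.sum_congr rfl hc, Finset.sum_const, smul_eq_mul, card_Injs] at h1
    rw [mul_comm]
    rw [card_univ, Fintype.card_perm, Fintype.card_fin] at h1
    exact h1.symm
  have hD : (n.descFactorial s : ℚ) ≠ 0 := by
    have hsn : s ≤ n := by simpa using Fintype.card_le_of_injective e he
    have : n.descFactorial s ≠ 0 := fun h0 =>
      absurd (Nat.descFactorial_eq_zero_iff_lt.mp h0) (not_lt.mpr hsn)
    exact_mod_cast this
  rw [hsplit, ← Finset.mul_sum]
  congr 1
  have : ((c : ℚ) * n.descFactorial s) = n.factorial := by exact_mod_cast hcount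
  field_simp
  linarith [this]

lemma card_SM : (SM s n).card = n.choose s := by
  have := Finset.card_powersetCard s (univ : Finset (Fin n))
  rw [card_univ, Fintype.card_fin] at this
  rw [← this]
  refine Finset.card_bij' (fun e _ => univ.image e) (fun A hA => ⇑(A.orderEmbOfFin
    (by simpa [Finset.mem_powersetCard] using hA))) ?_ ?_ ?_ ?_
  · intro e he
    simp only [SM, mem_filter, mem_univ, true_and] at he
    simp only [Finset.mem_powersetCard]
    exact ⟨Finset.subset_univ _, by rw [Finset.card_image_of_injective _ he.injective,
      card_univ, Fintype.card_fin]⟩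
  · intro A hA
    simp only [SM, mem_filter, mem_univ, true_and]
    exact (A.orderEmbOfFin _).strictMono
  · intro e he
    simp only [SM, mem_filter, mem_univ, true_and] at he
    exact (Finset.orderEmbOfFin_unique _ (fun x => Finset.mem_image_of_mem e (mem_univ x))
      he).symm
  · intro A hA
    ext x
    simp only [Finset.mem_image, mem_univ, true_and]
    constructor
    · rintro ⟨i, rfl⟩; exact Finset.orderEmbOfFin_mem A _ i
    · intro hx
      have hcard : A.card = s := by simpa [Finset.mem_powersetCard] using hA
      obtain ⟨i, hi⟩ := (A.orderIsoOfFin hcard).surjective ⟨x, hx⟩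
      exact ⟨i, by rw [← Finset.coe_orderIsoOfFin_apply, hi]⟩

lemma sum_injs_eq (G : (Fin s → Fin n) → ℚ) :
    ∑ h ∈ Injs s n, G h = ∑ e ∈ SM s n, ∑ τ : Equiv.Perm (Fin s), G (e ∘ ⇑τ) := by
  rw [← Finset.sum_product']
  refine (Finset.sum_bij
    (fun (p : (Fin s → Fin n) × Equiv.Perm (Fin s)) _ => p.1 ∘ ⇑p.2) ?_ ?_ ?_ ?_).symm
  · rintro ⟨e, τ⟩ hp
    simp only [Finset.mem_product, SM, mem_filter, mem_univ, true_and] at hp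
    simp only [Injs, mem_filter, mem_univ, true_and]
    exact hp.1.injective.comp τ.injective
  · rintro ⟨e, τ⟩ hp ⟨e', τ'⟩ hp' heq
    simp only [Finset.mem_product, SM, mem_filter, mem_univ, true_and] at hp hp'
    have heq' : e ∘ ⇑τ = e' ∘ ⇑τ' := heq
    have hio : univ.image (e ∘ ⇑τ) = univ.image e := by
      ext x
      simp only [Finset.mem_image, mem_univ, true_and, Function.comp_apply]
      exact ⟨fun ⟨a, ha⟩ => ⟨τ a, ha⟩, fun ⟨a, ha⟩ => ⟨τ.symm a, by simpa using ha⟩⟩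
    have hio' : univ.image (e' ∘ ⇑τ') = univ.image e' := by
      ext x
      simp only [Finset.mem_image, mem_univ, true_and, Function.comp_apply]
      exact ⟨fun ⟨a, ha⟩ => ⟨τ' a, ha⟩, fun ⟨a, ha⟩ => ⟨τ'.symm a, by simpa using ha⟩⟩
    have himg : univ.image e = univ.image e' := by rw [← hio, ← hio', heq']
    have hcard : (univ.image e).card = s := by
      rw [Finset.card_image_of_injective _ hp.1.injective, card_univ, Fintype.card_fin]
    have he1 : e = ⇑((univ.image e).orderEmbOfFin hcard) :=
      Finset.orderEmbOfFin_unique _ (fun x => Finset.mem_image_of_mem e (mem_univ x)) hp.1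
    have he2 : e' = ⇑((univ.image e).orderEmbOfFin hcard) :=
      Finset.orderEmbOfFin_unique _
        (fun x => himg ▸ Finset.mem_image_of_mem e' (mem_univ x)) hp'.1
    have hee : e = e' := he1.trans he2.symm
    subst hee
    have : ⇑τ = ⇑τ' := by
      funext a
      exact hp.1.injective (congrFun heq' a)
    exact Prod.ext rfl (Equiv.coe_fn_injective this)
  · intro h hh
    simp only [Injs, mem_filter, mem_univ, true_and] at hh
    have hcard : (univ.image h).card = s := by
      rw [Finset.card_image_of_injective _ hh, card_univ, Fintype.card_fin]
    set A := univ.image h with hA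
    set e : Fin s → Fin n := ⇑(A.orderEmbOfFin hcard) with he
    have hτi : Function.Injective (fun a => (A.orderIsoOfFin hcard).symm
        ⟨h a, Finset.mem_image_of_mem h (mem_univ a)⟩) := by
      intro a b hab
      have : (⟨h a, _⟩ : {x // x ∈ A}) = ⟨h b, _⟩ := (A.orderIsoOfFin hcard).symm.injective hab
      exact hh (Subtype.ext_iff.mp this)
    let τ : Equiv.Perm (Fin s) := Equiv.ofBijective _ (Finite.injective_iff_bijective.mp hτi)
    refine ⟨⟨e, τ⟩, ?_, ?_⟩
    · refine Finset.mem_product.mpr ⟨?_, mem_univ _⟩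
      simp only [SM, mem_filter, mem_univ, true_and]
      exact (A.orderEmbOfFin hcard).strictMono
    · funext a
      show e (τ a) = h a
      simp only [e, τ, Equiv.ofBijective_apply]
      rw [← Finset.coe_orderIsoOfFin_apply]
      simp
  · rintro ⟨e, τ⟩ _; rfl

lemma image_comp_eq {e : Fin s → Fin n} (U : Fin d → Fin k → Fin s)
    (hcov : ∀ x, ∃ j a, U j a = x) :
    (univ : Finset (Fin d)).biUnion (fun j => univ.image (e ∘ U j)) = univ.image e := by
  ext x
  simp only [Finset.mem_biUnion, Finset.mem_image, mem_univ, true_and, Function.comp_apply]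
  constructor
  · rintro ⟨j, a, rfl⟩; exact ⟨U j a, rfl⟩
  · rintro ⟨y, rfl⟩
    obtain ⟨j, a, rfl⟩ := hcov y
    exact ⟨j, a, rfl⟩

lemma tuple_decomp (F : (Fin d → Fin k → Fin n) → ℚ) :
    ∑ T ∈ univ.filter (fun T : Fin d → Fin k → Fin n => ∀ j, StrictMono (T j)), F T
      = ∑ s ∈ Finset.range (d * k + 1), ∑ U ∈ Types k d s, ∑ e ∈ SM s n,
          F (fun j => e ∘ U j) := by
  rw [show (∑ s ∈ Finset.range (d * k + 1), ∑ U ∈ Types k d s, ∑ e ∈ SM s n,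
        F (fun j => e ∘ U j))
      = ∑ p ∈ (Finset.range (d * k + 1)).sigma (fun s => Types k d s ×ˢ SM s n),
          F (fun j => p.2.2 ∘ p.2.1 j) by
    rw [Finset.sum_sigma]
    exact Finset.sum_congr rfl fun s _ => (Finset.sum_product' _ _ _).symm]
  refine (Finset.sum_bij
    (fun (p : Σ s : ℕ, (Fin d → Fin k → Fin s) × (Fin s → Fin n)) _ =>
      (fun j => p.2.2 ∘ p.2.1 j : Fin d → Fin k → Fin n)) ?_ ?_ ?_ ?_).symm
  · rintro ⟨s, U, e⟩ hp
    simp only [Finset.mem_sigma, Finset.mem_product, Types, SM, mem_filter, mem_univ,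
      true_and] at hp
    simp only [mem_filter, mem_univ, true_and]
    exact fun j => hp.2.2.comp (hp.2.1.1 j)
  · rintro ⟨s, U, e⟩ hp ⟨s', U', e'⟩ hp' heq
    simp only [Finset.mem_sigma, Finset.mem_product, Types, SM, mem_filter, mem_univ,
      true_and] at hp hp'
    have heq' : (fun j => e ∘ U j : Fin d → Fin k → Fin n) = fun j => e' ∘ U' j := heq
    have hA : (univ : Finset (Fin d)).biUnion (fun j => univ.image (e ∘ U j))
        = (univ : Finset (Fin d)).biUnion (fun j => univ.image (e' ∘ U' j)) := by
      refine Finset.biUnion_congr rfl fun j _ => ?_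
      rw [congrFun heq' j]
    rw [image_comp_eq U hp.2.1.2, image_comp_eq U' hp'.2.1.2] at hA
    have hcard : (univ.image e).card = s := by
      rw [Finset.card_image_of_injective _ hp.2.2.injective, card_univ, Fintype.card_fin]
    have hcard' : (univ.image e').card = s' := by
      rw [Finset.card_image_of_injective _ hp'.2.2.injective, card_univ, Fintype.card_fin]
    have hss : s = s' := by rw [← hcard, ← hcard', hA]
    subst hss
    have hee : e = e' := by
      have h1 : e = ⇑((univ.image e).orderEmbOfFin hcard) :=
        Finset.orderEmbOfFin_unique _ (fun x => Finset.mem_image_of_mem e (mem_univ x)) hp.2.2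
      have h2 : e' = ⇑((univ.image e).orderEmbOfFin hcard) :=
        Finset.orderEmbOfFin_unique _
          (fun x => hA ▸ Finset.mem_image_of_mem e' (mem_univ x)) hp'.2.2
      rw [h1, h2]
    subst hee
    have hUU : U = U' := by
      funext j a
      exact hp.2.2.injective (congrFun (congrFun heq' j) a)
    rw [hUU]
  · intro T hT
    simp only [mem_filter, mem_univ, true_and] at hT
    set A : Finset (Fin n) := (univ : Finset (Fin d)).biUnion (fun j => univ.image (T j))
      with hAdef
    have hmem : ∀ j a, T j a ∈ A := fun j a =>
      Finset.mem_biUnion.mpr ⟨j, mem_univ j, Finset.mem_image_of_mem _ (mem_univ a)⟩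
    have hsle : A.card ≤ d * k := by
      calc A.card ≤ ∑ j : Fin d, (univ.image (T j)).card := Finset.card_biUnion_le
        _ ≤ ∑ j : Fin d, k := Finset.sum_le_sum fun j _ =>
            le_trans Finset.card_image_le (by simp)
        _ = d * k := by simp [mul_comm]
    set s₀ := A.card with hs₀
    set e : Fin s₀ → Fin n := ⇑(A.orderEmbOfFin rfl) with he
    set U : Fin d → Fin k → Fin s₀ :=
      fun j a => (A.orderIsoOfFin rfl).symm ⟨T j a, hmem j a⟩ with hU
    refine ⟨⟨s₀, U, e⟩, ?_, ?_⟩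
    · refine Finset.mem_sigma.mpr ⟨?_, Finset.mem_product.mpr ⟨?_, ?_⟩⟩
      · exact Finset.mem_range.mpr (Nat.lt_succ_of_le hsle)
      · simp only [Types, mem_filter, mem_univ, true_and]
        constructor
        · intro j a b hab
          have : (⟨T j a, hmem j a⟩ : {x // x ∈ A}) < ⟨T j b, hmem j b⟩ := by
            simp only [Subtype.mk_lt_mk]
            exact hT j hab
          exact (A.orderIsoOfFin rfl).symm.lt_iff_lt.mpr this
        · intro x
          have hy : ((A.orderIsoOfFin rfl) x : Fin n) ∈ A := ((A.orderIsoOfFin rfl) x).2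
          obtain ⟨j, -, hj⟩ := Finset.mem_biUnion.mp hy
          obtain ⟨a, -, ha⟩ := Finset.mem_image.mp hj
          refine ⟨j, a, ?_⟩
          show (A.orderIsoOfFin rfl).symm ⟨T j a, hmem j a⟩ = x
          have hz : (⟨T j a, hmem j a⟩ : {z // z ∈ A}) = (A.orderIsoOfFin rfl) x :=
            Subtype.ext ha
          rw [hz, OrderIso.symm_apply_apply]
      · simp only [SM, mem_filter, mem_univ, true_and]
        exact (A.orderEmbOfFin rfl).strictMono
    · funext j a
      show e (U j a) = T j a
      simp only [e, U]
      rw [← Finset.coe_orderIsoOfFin_apply]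
      simp
  · rintro ⟨s, U, e⟩ _; rfl

lemma patCount_eq (σ : Fin k → Fin k) (g : Equiv.Perm (Fin n)) :
    patCount k n σ g
      = (univ.filter (fun I : Fin k → Fin n => StrictMono I ∧ IsSorted σ (⇑g ∘ I))).card := by
  rw [patCount, Nat.card_eq_fintype_card, Fintype.card_subtype]

lemma power_expand (σ : Fin k → Fin k) (n : ℕ) :
    (∑ π : Equiv.Perm (Fin n), (patCount k n σ π : ℚ) ^ d)
      = ∑ T ∈ univ.filter (fun T : Fin d → Fin k → Fin n => ∀ j, StrictMono (T j)),
          ∑ π : Equiv.Perm (Fin n), (if ∀ j, IsSorted σ (⇑π ∘ T j) then (1:ℚ) else 0) := by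
  have h1 : ∀ π : Equiv.Perm (Fin n), (patCount k n σ π : ℚ)
      = ∑ I : Fin k → Fin n, (if StrictMono I ∧ IsSorted σ (⇑π ∘ I) then (1:ℚ) else 0) := by
    intro π
    rw [patCount_eq, Finset.sum_boole]
  calc (∑ π : Equiv.Perm (Fin n), (patCount k n σ π : ℚ) ^ d)
      = ∑ π : Equiv.Perm (Fin n), ∏ _j : Fin d,
          ∑ I : Fin k → Fin n, (if StrictMono I ∧ IsSorted σ (⇑π ∘ I) then (1:ℚ) else 0) := by
        refine Finset.sum_congr rfl fun π _ => ?_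
        rw [h1 π, Finset.prod_const, card_univ, Fintype.card_fin]
    _ = ∑ π : Equiv.Perm (Fin n), ∑ T : Fin d → Fin k → Fin n,
          ∏ j : Fin d, (if StrictMono (T j) ∧ IsSorted σ (⇑π ∘ T j) then (1:ℚ) else 0) := by
        refine Finset.sum_congr rfl fun π _ => ?_
        rw [Finset.prod_univ_sum]
        exact Finset.sum_congr (by simp) fun _ _ => rfl
    _ = ∑ T : Fin d → Fin k → Fin n, ∑ π : Equiv.Perm (Fin n),
          (if ∀ j, StrictMono (T j) then (1:ℚ) else 0)
            * (if ∀ j, IsSorted σ (⇑π ∘ T j) then (1:ℚ) else 0) := by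
        rw [Finset.sum_comm]
        refine Finset.sum_congr rfl fun T _ => Finset.sum_congr rfl fun π _ => ?_
        rw [Fintype.prod_boole]
        by_cases hA : ∀ j, StrictMono (T j) <;> by_cases hB : ∀ j, IsSorted σ (⇑π ∘ T j) <;>
          simp [hA, hB, forall_and]
    _ = ∑ T ∈ univ.filter (fun T : Fin d → Fin k → Fin n => ∀ j, StrictMono (T j)),
          ∑ π : Equiv.Perm (Fin n), (if ∀ j, IsSorted σ (⇑π ∘ T j) then (1:ℚ) else 0) := by
        rw [Finset.sum_filter]
        refine Finset.sum_congr rfl fun T _ => ?_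
        by_cases hA : ∀ j, StrictMono (T j) <;> simp [hA]

end GRAux

/-- For fixed `σ ∈ S_k` and `d ≥ 1`, there is a single-variable polynomial
`p` such that for all `n ≥ 2dk`, the sum over all `π ∈ S_n` of `N_σ(π)^d` equals
`n! · p(n)`. -/
theorem pattern_moment_polynomial_in_n (k d : ℕ) (hk : 0 < k) (hd : 0 < d)
    (σ : Equiv.Perm (Fin k)) :
    ∃ p : Polynomial ℚ, ∀ n : ℕ, 2 * d * k ≤ n →
      (∑ π : Equiv.Perm (Fin n), (patCount k n ⇑σ π : ℚ) ^ d) =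
        (n.factorial : ℚ) * p.eval (n : ℚ) := by
  classical
  open Finset GRAux in
  refine ⟨∑ s ∈ Finset.range (d * k + 1),
      Polynomial.C ((∑ U ∈ Types k d s, (gcount (⇑σ) U : ℚ)) /
          ((s.factorial : ℚ) * (s.factorial : ℚ)))
        * ∏ i ∈ Finset.range s, (Polynomial.X - Polynomial.C (i : ℚ)), fun n hn => ?_⟩
  rw [power_expand (⇑σ) n, tuple_decomp]
  rw [Polynomial.eval_finset_sum]
  simp only [Polynomial.eval_mul, Polynomial.eval_C, Polynomial.eval_prod,
    Polynomial.eval_sub, Polynomial.eval_X]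
  rw [Finset.mul_sum]
  refine Finset.sum_congr rfl fun s hs => ?_
  -- basic numerology
  have hsn : s ≤ n := by
    have h1 : s ≤ d * k := Nat.lt_succ_iff.mp (Finset.mem_range.mp hs)
    have h2 : d * k ≤ 2 * d * k := by
      rw [mul_assoc]
      exact Nat.le_mul_of_pos_left _ (by norm_num)
    exact le_trans h1 (le_trans h2 hn)
  have hDfc : (n.descFactorial s : ℚ) = (s.factorial : ℚ) * (n.choose s : ℚ) := by
    exact_mod_cast Nat.descFactorial_eq_factorial_mul_choose n s
  have hfac0 : (s.factorial : ℚ) ≠ 0 := by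
    exact_mod_cast s.factorial_ne_zero
  have hch0 : (n.choose s : ℚ) ≠ 0 := by
    have := Nat.choose_pos hsn
    positivity
  have hDcast : ((n.descFactorial s : ℚ)) = ∏ i ∈ Finset.range s, ((n : ℚ) - i) := by
    rw [Nat.descFactorial_eq_prod_range, Nat.cast_prod]
    refine Finset.prod_congr rfl fun i hi => ?_
    rw [Nat.cast_sub (le_trans (le_of_lt (Finset.mem_range.mp hi)) hsn)]
  -- inner computation: for each type U the sum over embeddings and permutations
  have hinner : ∀ U ∈ Types k d s,
      (∑ e ∈ SM s n, ∑ π : Equiv.Perm (Fin n),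
          (if ∀ j, IsSorted (⇑σ) (⇑π ∘ (fun j => e ∘ U j) j) then (1:ℚ) else 0))
        = (n.choose s : ℚ) * ((n.factorial : ℚ) / (n.descFactorial s)
            * ((n.choose s : ℚ) * (gcount (⇑σ) U : ℚ))) := by
    intro U hU
    have hUcov : ∀ x, ∃ j a, U j a = x := by
      have := Finset.mem_filter.mp hU
      exact this.2.2
    have hFe : ∀ e ∈ SM s n, (∑ π : Equiv.Perm (Fin n),
        (if ∀ j, IsSorted (⇑σ) (⇑π ∘ (fun j => e ∘ U j) j) then (1:ℚ) else 0))
        = (n.factorial : ℚ) / (n.descFactorial s)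
            * ((n.choose s : ℚ) * (gcount (⇑σ) U : ℚ)) := by
      intro e he
      have hesm : StrictMono e := by simpa [SM] using he
      have step1 := sum_perm_comp (s := s) (n := n) hesm.injective
        (fun h => if ∀ j, IsSorted (⇑σ) (h ∘ U j) then (1:ℚ) else 0)
      have step2 : (∑ h ∈ Injs s n,
          (if ∀ j, IsSorted (⇑σ) (h ∘ U j) then (1:ℚ) else 0))
          = (n.choose s : ℚ) * (gcount (⇑σ) U : ℚ) := by
        rw [sum_injs_eq (fun h => if ∀ j, IsSorted (⇑σ) (h ∘ U j) then (1:ℚ) else 0)]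
        have hτ : ∀ e' ∈ SM s n, (∑ τ : Equiv.Perm (Fin s),
            (if ∀ j, IsSorted (⇑σ) ((e' ∘ ⇑τ) ∘ U j) then (1:ℚ) else 0))
            = (gcount (⇑σ) U : ℚ) := by
          intro e' he'
          have he'sm : StrictMono e' := by simpa [SM] using he'
          have hcongr : ∀ τ : Equiv.Perm (Fin s),
              (if ∀ j, IsSorted (⇑σ) ((e' ∘ ⇑τ) ∘ U j) then (1:ℚ) else 0)
              = (if ∀ j, IsSorted (⇑σ) (⇑τ ∘ U j) then (1:ℚ) else 0) := by
            intro τ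
            refine if_congr (forall_congr' fun j => ?_) rfl rfl
            exact isSorted_comp_strictMono he'sm (⇑τ ∘ U j)
          rw [Finset.sum_congr rfl fun τ _ => hcongr τ, Finset.sum_boole]
          rfl
        rw [Finset.sum_congr rfl hτ, Finset.sum_const, card_SM, nsmul_eq_mul]
      rw [← step2, ← step1]
      rfl
    rw [Finset.sum_congr rfl hFe, Finset.sum_const, card_SM, nsmul_eq_mul]
  rw [Finset.sum_congr rfl hinner, ← hDcast]
  calc (∑ U ∈ Types k d s, (n.choose s : ℚ) * ((n.factorial : ℚ) / (n.descFactorial s)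
          * ((n.choose s : ℚ) * (gcount (⇑σ) U : ℚ))))
      = ((n.choose s : ℚ) * ((n.factorial : ℚ) / (n.descFactorial s)) * (n.choose s : ℚ))
          * ∑ U ∈ Types k d s, (gcount (⇑σ) U : ℚ) := by
        rw [Finset.mul_sum]
        exact Finset.sum_congr rfl fun U _ => by ring
    _ = (n.factorial : ℚ) * ((∑ U ∈ Types k d s, (gcount (⇑σ) U : ℚ)) /
          ((s.factorial : ℚ) * (s.factorial : ℚ)) * (n.descFactorial s : ℚ)) := by
        rw [hDfc]
        field_simp
end
end

section
/- For all positive integers k and n, every ℂ-linear endomorphism φ of W_{k,n} that commutes with the action of S_n (i.e., φ ∘ ρ(g) = ρ(g) ∘ φ for all g ∈ S_n, where ρ(g) is the operator (ρ(g) f)(I) = f(g⁻¹ ∘ I)) lies in the ℂ-linear span of the operators T_P, as P ranges over all set partitions of Fin k ⊕ Fin k. (Surjectivity of the partition algebra map Φ_{k,n}.) -/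
/-!
Formalization of statements from "Stable characters from permutation patterns"
by C. Gaetz and C. Ryba.
-/

open scoped Classical

noncomputable section

/-!
Since a labelling is constant on the parts of `P` exactly when its kernel is coarser than `P`,
`T_P = ∑_{Q ≥ P} T'_Q`; downward induction on the finite lattice of set partitions then puts every
`T'_Q` in the span of the `T_P`. Conversely, the matrix of an equivariant `φ` is invariant under the
diagonal action of `S_n`, and two pairs `(J, I)` whose labellings have the same kernel differ by a
permutation, so the entry at `(J, I)` depends only on `ker ℓ_{J,I}`: this says `φ = ∑_Q c_Q T'_Q`.
-/

open Finset

theorem Submodule.mem_span_range_of_eq_sum_ge {R M α : Type*} [Ring R] [AddCommGroup M]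
    [Module R M] [PartialOrder α] [Fintype α] (f g : α → M)
    (hg : ∀ a, g a = ∑ b ∈ univ.filter (a ≤ ·), f b) (a : α) :
    f a ∈ Submodule.span R (Set.range g) := by
  induction a using WellFoundedGT.induction with
  | _ a ih =>
    have hfa : f a = g a - ∑ b ∈ (univ.filter (a ≤ ·)).erase a, f b := by
      rw [hg, ← add_sum_erase _ _ (mem_filter.mpr ⟨mem_univ a, le_rfl⟩), add_sub_cancel_right]
    rw [hfa]
    refine sub_mem (Submodule.subset_span ⟨a, rfl⟩) (Submodule.sum_mem _ fun b hb => ih b ?_)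
    obtain ⟨hba, hb⟩ := mem_erase.mp hb
    exact lt_of_le_of_ne (mem_filter.mp hb).2 (Ne.symm hba)

theorem Equiv.Perm.exists_comp_eq_of_ker_eq {α β : Type*} [Finite α] {f f' : α → β}
    (h : Setoid.ker f = Setoid.ker f') : ∃ σ : Equiv.Perm β, ⇑σ ∘ f = f' := by
  let u : Quotient (Setoid.ker f) → β := Setoid.kerLift f
  let v : Quotient (Setoid.ker f) → β := Quotient.lift f' fun a b hab => by rwa [h] at hab
  have hv : Function.Injective v := by
    rintro ⟨a⟩ ⟨b⟩ hab
    exact Quotient.sound (by rw [h]; exact hab)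
  obtain ⟨σ, hσ⟩ := exists_extending_pair u v (Setoid.kerLift_injective f) hv
  exact ⟨σ, funext fun a => hσ ⟦a⟧⟩

variable {k n : ℕ}

theorem CP_eq_ite (P : Setoid (Fin k ⊕ Fin k)) (J I : Fin k → Fin n) :
    CP P J I = if P ≤ Setoid.ker (label J I) then 1 else 0 := by
  simp only [CP, Setoid.le_def, Setoid.ker_def]

theorem CP'_eq_ite (P : Setoid (Fin k ⊕ Fin k)) (J I : Fin k → Fin n) :
    CP' P J I = if P = Setoid.ker (label J I) then 1 else 0 := by
  refine if_congr ⟨fun ⟨hle, hge⟩ => Setoid.ext fun a b => ⟨hle a b, ?_⟩, ?_⟩ rfl rfl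
  · exact fun hab => by_contra fun hP => hge a b hP hab
  · rintro rfl
    exact ⟨fun a b => id, fun a b => id⟩

theorem TP_eq_sum_TP' (P : Setoid (Fin k ⊕ Fin k)) :
    TP k n P = ∑ Q ∈ univ.filter (P ≤ ·), TP' k n Q := by
  simp only [TP, TP', ← Matrix.toLin'_apply', ← map_sum]
  congr 1
  ext J I
  simp [Matrix.sum_apply, CP_eq_ite, CP'_eq_ite]

theorem TP'_mem_span_TP (Q : Setoid (Fin k ⊕ Fin k)) :
    TP' k n Q ∈ Submodule.span ℂ (Set.range fun P : Setoid (Fin k ⊕ Fin k) => TP k n P) :=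
  Submodule.mem_span_range_of_eq_sum_ge _ _ TP_eq_sum_TP' Q

theorem rho_single (g : Equiv.Perm (Fin n)) (I : Fin k → Fin n) :
    rho k n g (Pi.single I 1) = Pi.single (⇑g ∘ I) 1 := by
  funext J
  simp only [rho, LinearMap.coe_mk, AddHom.coe_mk, Pi.single_apply, Equiv.Perm.coe_inv,
    Equiv.symm_comp_eq]

section Equivariant

variable {φ : W k n →ₗ[ℂ] W k n} (hφ : ∀ g : Equiv.Perm (Fin n), φ ∘ₗ rho k n g = rho k n g ∘ₗ φ)
include hφ

theorem toMatrix'_apply_comp_perm (g : Equiv.Perm (Fin n)) (J I : Fin k → Fin n) :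
    LinearMap.toMatrix' φ (⇑g ∘ J) (⇑g ∘ I) = LinearMap.toMatrix' φ J I := by
  rw [LinearMap.toMatrix'_apply, LinearMap.toMatrix'_apply, ← rho_single, ← LinearMap.comp_apply,
    hφ]
  simp [rho, ← Function.comp_assoc]

theorem toMatrix'_apply_eq_of_ker_label_eq {J I J' I' : Fin k → Fin n}
    (h : Setoid.ker (label J I) = Setoid.ker (label J' I')) :
    LinearMap.toMatrix' φ J I = LinearMap.toMatrix' φ J' I' := by
  obtain ⟨σ, hσ⟩ := Equiv.Perm.exists_comp_eq_of_ker_eq h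
  have hJ : ⇑σ ∘ J = J' := congrArg (· ∘ Sum.inl) hσ
  have hI : ⇑σ ∘ I = I' := congrArg (· ∘ Sum.inr) hσ
  rw [← hJ, ← hI, toMatrix'_apply_comp_perm hφ]

theorem exists_eq_sum_smul_TP' :
    ∃ c : Setoid (Fin k ⊕ Fin k) → ℂ, φ = ∑ Q, c Q • TP' k n Q := by
  -- `c Q` is the common entry of `φ` at the pairs `(J, I)` with `ker ℓ_{J,I} = Q`
  let c := Function.extend
    (fun p : (Fin k → Fin n) × (Fin k → Fin n) => Setoid.ker (label p.1 p.2))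
    (fun p => LinearMap.toMatrix' φ p.1 p.2) 0
  have hc (J I : Fin k → Fin n) : c (Setoid.ker (label J I)) = LinearMap.toMatrix' φ J I :=
    Function.FactorsThrough.extend_apply (fun _ _ h => toMatrix'_apply_eq_of_ker_label_eq hφ h) 0
      (J, I)
  refine ⟨c, ?_⟩
  rw [← Matrix.toLin'_toMatrix' φ]
  simp only [TP', ← Matrix.toLin'_apply', ← map_smul, ← map_sum]
  congr 1
  ext J I
  simp [Matrix.sum_apply, CP'_eq_ite, hc]

end Equivariant

theorem partition_algebra_map_surjective_general (k n : ℕ)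
    (φ : W k n →ₗ[ℂ] W k n)
    (hφ : ∀ g : Equiv.Perm (Fin n), φ ∘ₗ rho k n g = rho k n g ∘ₗ φ) :
    φ ∈ Submodule.span ℂ (Set.range fun P : Setoid (Fin k ⊕ Fin k) => TP k n P) := by
  obtain ⟨c, rfl⟩ := exists_eq_sum_smul_TP' hφ
  exact Submodule.sum_mem _ fun Q _ => Submodule.smul_mem _ _ (TP'_mem_span_TP Q)

/-- Every `ℂ`-linear endomorphism of `W_{k,n}` commuting with the `S_n`-action
lies in the linear span of the operators `T_P` (surjectivity of `Φ_{k,n}`). -/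
theorem partition_algebra_map_surjective (k n : ℕ) (hk : 0 < k) (hn : 0 < n)
    (φ : W k n →ₗ[ℂ] W k n)
    (hφ : ∀ g : Equiv.Perm (Fin n), φ ∘ₗ rho k n g = rho k n g ∘ₗ φ) :
    φ ∈ Submodule.span ℂ (Set.range fun P : Setoid (Fin k ⊕ Fin k) => TP k n P) :=
  partition_algebra_map_surjective_general k n φ hφ
end
end

section
/- For positive integers k and n with n ≥ 2k, the family of operators (T_P), indexed by all set partitions P of Fin k ⊕ Fin k, is linearly independent in the space of ℂ-linear endomorphisms of W_{k,n}. (Injectivity of the partition algebra map Φ_{k,n} for n ≥ 2k.) -/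
/-!
Formalization of statements from "Stable characters from permutation patterns"
by C. Gaetz and C. Ryba.
-/

open scoped Classical

noncomputable section

/-- For `n ≥ 2k`, every set partition of `Fin k ⊕ Fin k` is realized as the kernel of
some labelling. -/
lemma exists_label_ker (k n : ℕ) (hn : 2 * k ≤ n) (Q : Setoid (Fin k ⊕ Fin k)) :
    ∃ J I : Fin k → Fin n, ∀ a b, Q.r a b ↔ label J I a = label J I b := by
  haveI : Fintype (Quotient Q) := Fintype.ofFinite _
  have hcard : Fintype.card (Quotient Q) ≤ n := by
    have h1 : Fintype.card (Quotient Q) ≤ Fintype.card (Fin k ⊕ Fin k) :=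
      Fintype.card_le_of_surjective (Quotient.mk Q) (fun y => Quotient.exists_rep y)
    simpa using h1.trans (by simp; omega)
  obtain ⟨e⟩ : Nonempty (Quotient Q ↪ Fin n) := by
    have := Function.Embedding.nonempty_of_card_le (β := Fin n) (by simpa using hcard)
    exact this
  refine ⟨fun r => e ⟦Sum.inl r⟧, fun r => e ⟦Sum.inr r⟧, ?_⟩
  intro a b
  have hlab : ∀ a : Fin k ⊕ Fin k,
      label (fun r => e ⟦Sum.inl r⟧) (fun r => e ⟦Sum.inr r⟧) a = e ⟦a⟧ := by
    rintro (x | x) <;> rfl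
  rw [hlab, hlab]
  constructor
  · intro h; exact congrArg e (Quotient.sound h)
  · intro h; exact Quotient.exact (e.injective h)

/-- For `n ≥ 2k`, the operators `T_P`, indexed by set partitions `P` of
`Fin k ⊕ Fin k`, are linearly independent (injectivity of `Φ_{k,n}` for `n ≥ 2k`). -/
theorem partition_algebra_map_injective (k n : ℕ) (hk : 0 < k) (hn : 2 * k ≤ n) :
    LinearIndependent ℂ (fun P : Setoid (Fin k ⊕ Fin k) => TP k n P) := by
  rw [Fintype.linearIndependent_iff]
  intro g hg
  -- key: for every setoid Q, the sum of g P over P ≤ Q is 0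
  have key : ∀ Q : Setoid (Fin k ⊕ Fin k),
      ∑ P ∈ Finset.univ.filter (fun P => P ≤ Q), g P = 0 := by
    intro Q
    obtain ⟨J, I, hQ⟩ := exists_label_ker k n hn Q
    have h0 := congrFun (congrArg (fun T : W k n →ₗ[ℂ] W k n => T (Pi.single I 1)) hg) J
    have h1 : ∑ P : Setoid (Fin k ⊕ Fin k), g P * CP P J I = 0 := by
      simpa [TP, Matrix.mulVecLin, Matrix.mulVec, dotProduct, Pi.single_apply,
        mul_ite, mul_comm] using h0
    have hC : ∀ P : Setoid (Fin k ⊕ Fin k), CP P J I = if P ≤ Q then 1 else 0 := by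
      intro P
      unfold CP
      congr 1
      simp only [eq_iff_iff]
      constructor
      · intro h; exact Setoid.le_def.2 fun {a b} hab => (hQ a b).2 (h a b hab)
      · intro h a b hab; exact (hQ a b).1 (Setoid.le_def.1 h hab)
    rw [← h1, Finset.sum_filter]
    refine Finset.sum_congr rfl fun P _ => ?_
    rw [hC]
    by_cases h : P ≤ Q <;> simp [h]
  -- well-founded induction
  intro Q
  induction Q using WellFoundedLT.induction with
  | ind Q ih =>
    have hsplit : Finset.univ.filter (fun P => P ≤ Q) =
        insert Q (Finset.univ.filter (fun P : Setoid (Fin k ⊕ Fin k) => P < Q)) := by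
      ext P
      simp [le_iff_lt_or_eq, or_comm]
    have h1 := key Q
    rw [hsplit, Finset.sum_insert (by simp)] at h1
    have h2 : ∑ P ∈ Finset.univ.filter (fun P : Setoid (Fin k ⊕ Fin k) => P < Q), g P = 0 :=
      Finset.sum_eq_zero fun P hP => ih P (Finset.mem_filter.1 hP).2
    rw [h2, add_zero] at h1
    exact h1
end
end

section
/- For positive integers k and n and a set partition P of Fin k ⊕ Fin k: the operator T'_P is the zero map if and only if the number of parts of P is strictly greater than n; moreover, the family of operators (T'_P), indexed by set partitions P of Fin k ⊕ Fin k having at most n parts, is linearly independent in the space of ℂ-linear endomorphisms of W_{k,n}. (Description of the kernel of the partition algebra map Φ_{k,n}.) -/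
/-!
Formalization of statements from "Stable characters from permutation patterns"
by C. Gaetz and C. Ryba.
-/

open scoped Classical

noncomputable section

section kernel

variable {k n : ℕ}

lemma label_quot (P : Setoid (Fin k ⊕ Fin k)) (f : Quotient P → Fin n) (a : Fin k ⊕ Fin k) :
    label (fun r => f ⟦Sum.inl r⟧) (fun r => f ⟦Sum.inr r⟧) a = f ⟦a⟧ := by
  cases a <;> rfl

lemma exists_words (P : Setoid (Fin k ⊕ Fin k)) (h : Nat.card (Quotient P) ≤ n) :
    ∃ J I : Fin k → Fin n, ∀ a b, P.r a b ↔ label J I a = label J I b := by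
  haveI : Fintype (Quotient P) := Fintype.ofFinite _
  have hcard : Fintype.card (Quotient P) ≤ Fintype.card (Fin n) := by
    rw [Fintype.card_fin]; rwa [Nat.card_eq_fintype_card] at h
  obtain ⟨f⟩ := Function.Embedding.nonempty_of_card_le hcard
  refine ⟨fun r => f ⟦Sum.inl r⟧, fun r => f ⟦Sum.inr r⟧, fun a b => ?_⟩
  rw [label_quot, label_quot, f.apply_eq_iff_eq]
  exact ⟨fun h => Quotient.sound h, fun h => Quotient.exact h⟩

lemma card_le_of_words (P : Setoid (Fin k ⊕ Fin k)) (J I : Fin k → Fin n)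
    (h : ∀ a b, P.r a b ↔ label J I a = label J I b) :
    Nat.card (Quotient P) ≤ n := by
  have := Nat.card_le_card_of_injective
    (Quotient.lift (label J I) (fun a b hab => (h a b).1 hab) : Quotient P → Fin n) ?_
  · simpa using this
  · rintro ⟨a⟩ ⟨b⟩ hab
    exact Quotient.sound ((h a b).2 hab)

lemma CP'_cond_iff (P : Setoid (Fin k ⊕ Fin k)) (J I : Fin k → Fin n) :
    ((∀ a b, P.r a b → label J I a = label J I b) ∧
      (∀ a b, ¬ P.r a b → label J I a ≠ label J I b)) ↔
    (∀ a b, P.r a b ↔ label J I a = label J I b) := by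
  constructor
  · rintro ⟨h1, h2⟩ a b
    exact ⟨h1 a b, fun he => by_contra fun hr => h2 a b hr he⟩
  · intro h
    exact ⟨fun a b => (h a b).1, fun a b hr he => hr ((h a b).2 he)⟩

lemma CP'_eq_one_iff (P : Setoid (Fin k ⊕ Fin k)) (J I : Fin k → Fin n) :
    CP' P J I = 1 ↔ ∀ a b, P.r a b ↔ label J I a = label J I b := by
  unfold CP'
  rw [if_congr (CP'_cond_iff P J I) rfl rfl]
  split_ifs with h
  · simpa using h
  · constructor
    · intro h0
      exact absurd h0 (by norm_num)
    · intro hc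
      exact absurd hc h

lemma CP'_eq_zero (P : Setoid (Fin k ⊕ Fin k)) (J I : Fin k → Fin n)
    (h : ¬ ∀ a b, P.r a b ↔ label J I a = label J I b) : CP' P J I = 0 := by
  unfold CP'
  rw [if_congr (CP'_cond_iff P J I) rfl rfl, if_neg h]

lemma TP'_single (P : Setoid (Fin k ⊕ Fin k)) (I J : Fin k → Fin n) :
    (TP' k n P) (Pi.single I 1) J = CP' P J I := by
  simp [TP', Matrix.mulVecLin_apply, Matrix.mulVec, dotProduct, Pi.single_apply,
    mul_ite, mul_one, mul_zero]

end kernel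

/-- `T'_P = 0` if and only if `P` has more than `n` parts; moreover the
family `T'_P`, indexed by partitions with at most `n` parts, is linearly independent
(description of the kernel of `Φ_{k,n}`). -/
theorem partition_algebra_kernel (k n : ℕ) (hk : 0 < k) (hn : 0 < n) :
    (∀ P : Setoid (Fin k ⊕ Fin k), TP' k n P = 0 ↔ n < Nat.card (Quotient P)) ∧
    LinearIndependent ℂ
      (fun P : {P : Setoid (Fin k ⊕ Fin k) // Nat.card (Quotient P) ≤ n} =>
        TP' k n P.1) := by
  constructor
  · intro P
    constructor
    · intro h0
      by_contra hle
      push_neg at hle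
      obtain ⟨J, I, hJI⟩ := exists_words P hle
      have h1 : CP' P J I = 1 := (CP'_eq_one_iff P J I).2 hJI
      have h2 : (TP' k n P) (Pi.single I 1) J = 0 := by rw [h0]; rfl
      rw [TP'_single, h1] at h2
      exact one_ne_zero h2
    · intro hlt
      have hM : (Matrix.of fun J I => CP' P J I : Matrix (Fin k → Fin n) (Fin k → Fin n) ℂ) = 0 := by
        ext J I
        have : CP' P J I = 0 := by
          apply CP'_eq_zero
          intro hJI
          exact absurd (card_le_of_words P J I hJI) (not_le.2 hlt)
        simpa using this
      rw [TP', hM, Matrix.mulVecLin_zero]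
  · rw [Fintype.linearIndependent_iff]
    intro g hg P0
    obtain ⟨J, I, hJI⟩ := exists_words P0.1 P0.2
    have := congrFun (LinearMap.congr_fun hg (Pi.single I 1)) J
    simp only [LinearMap.coe_sum, Finset.sum_apply, LinearMap.smul_apply, Pi.smul_apply,
      LinearMap.zero_apply, Pi.zero_apply] at this
    have key : ∀ P : {P : Setoid (Fin k ⊕ Fin k) // Nat.card (Quotient P) ≤ n},
        CP' P.1 J I = if P = P0 then 1 else 0 := by
      intro P
      by_cases hP : P = P0
      · subst hP; simp [(CP'_eq_one_iff P.1 J I).2 hJI]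
      · rw [if_neg hP]
        apply CP'_eq_zero
        intro hJI'
        apply hP
        apply Subtype.ext
        apply Setoid.ext
        intro a b
        rw [hJI' a b, hJI a b]
    simp only [TP'_single, key] at this
    simpa using this
end
end

section
/- For all positive integers k and n and every set partition P of Fin k ⊕ Fin k, the operator T_P equals the sum of the operators T'_{P'} over all set partitions P' of Fin k ⊕ Fin k that are coarsenings of P (i.e., every part of P is contained in a part of P'). -/
/-!
Formalization of statements from "Stable characters from permutation patterns"
by C. Gaetz and C. Ryba.
-/

open scoped Classical

noncomputable section

lemma CP_eq_sum_CP' {k n : ℕ} (P : Setoid (Fin k ⊕ Fin k)) (J I : Fin k → Fin n) :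
    CP P J I =
      ∑ P' ∈ Finset.univ.filter
          (fun P' : Setoid (Fin k ⊕ Fin k) => ∀ a b, P.r a b → P'.r a b),
        CP' P' J I := by
  classical
  set ℓ := label J I with hℓ
  by_cases h : ∀ a b, P.r a b → ℓ a = ℓ b
  · set Q : Setoid (Fin k ⊕ Fin k) := Setoid.ker ℓ with hQ
    rw [Finset.sum_eq_single_of_mem Q]
    · have h1 : CP P J I = 1 := by rw [CP, if_pos h]
      have h2 : CP' Q J I = 1 := by
        simp only [CP', hQ]
        rw [if_pos]
        constructor
        · intro a b hab; exact hab
        · intro a b hab; exact hab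
      rw [h1, h2]
    · simp only [Finset.mem_filter, Finset.mem_univ, true_and]
      intro a b hab
      exact h a b hab
    · intro P' _ hne
      simp only [CP']
      rw [if_neg]
      rintro ⟨h1, h2⟩
      apply hne
      apply Setoid.ext
      intro a b
      constructor
      · intro hab
        exact h1 a b hab
      · intro hab
        by_contra hc
        exact h2 a b hc hab
  · have h1 : CP P J I = 0 := by rw [CP, if_neg h]
    rw [h1]
    symm
    apply Finset.sum_eq_zero
    intro P' hP'
    simp only [Finset.mem_filter, Finset.mem_univ, true_and] at hP'
    simp only [CP']
    rw [if_neg]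
    rintro ⟨h2, _⟩
    exact h fun a b hab => h2 a b (hP' a b hab)

/-- `T_P` is the sum of `T'_{P'}` over all coarsenings `P'` of `P`. -/
theorem TP_eq_sum_coarsenings (k n : ℕ) (hk : 0 < k) (hn : 0 < n)
    (P : Setoid (Fin k ⊕ Fin k)) :
    TP k n P =
      ∑ P' ∈ Finset.univ.filter
          (fun P' : Setoid (Fin k ⊕ Fin k) => ∀ a b, P.r a b → P'.r a b),
        TP' k n P' := by
  apply LinearMap.ext
  intro f
  funext J
  rw [LinearMap.sum_apply]
  rw [Finset.sum_apply]
  simp only [TP, TP', Matrix.mulVecLin_apply, Matrix.mulVec, dotProduct, Matrix.of_apply]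
  rw [Finset.sum_comm]
  apply Finset.sum_congr rfl
  intro I _
  rw [← Finset.sum_mul, ← CP_eq_sum_CP']
end
end

section
/- Fix positive integers k_1, k_2, n and functions α : Fin k_1 → Fin k_1 and β : Fin k_2 → Fin k_2. Call a function γ : Fin (k_1 + k_2) → Fin (k_1 + k_2) admissible if: (i) the word of length k_1 obtained by restricting γ to the first k_1 coordinates is α-sorted, (ii) the word of length k_2 obtained by restricting γ to the last k_2 coordinates is β-sorted, and (iii) the range of γ is an initial segment {j : j < r} of Fin (k_1 + k_2) for some r. Then for every word K : Fin (k_1 + k_2) → Fin n, the following are equivalent: (a) the restriction of K to the first k_1 coordinates is α-sorted and the restriction of K to the last k_2 coordinates is β-sorted; (b) there exists exactly one admissible γ such that K is γ-sorted. (Equivalently, E_α ⊗ E_β = Σ_γ E_γ summed over admissible γ.) -/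
/-!
Formalization of statements from "Stable characters from permutation patterns"
by C. Gaetz and C. Ryba.
-/

open scoped Classical

noncomputable section

/-- A function `γ : Fin (k₁ + k₂) → Fin (k₁ + k₂)` is admissible (for `α`, `β`) if its
restriction to the first `k₁` coordinates is `α`-sorted, its restriction to the last `k₂`
coordinates is `β`-sorted, and its range is an initial segment `{j : j < r}`. -/
def Admissible (k₁ k₂ : ℕ) (α : Fin k₁ → Fin k₁) (β : Fin k₂ → Fin k₂)
    (γ : Fin (k₁ + k₂) → Fin (k₁ + k₂)) : Prop :=
  IsSorted α (fun a => γ (Fin.castAdd k₂ a)) ∧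
  IsSorted β (fun b => γ (Fin.natAdd k₁ b)) ∧
  ∃ r : ℕ, ∀ j : Fin (k₁ + k₂), j ∈ Set.range γ ↔ (j : ℕ) < r

private lemma isSorted_congr {k : ℕ} {M N : Type*} [LinearOrder M] [LinearOrder N]
    (σ : Fin k → Fin k) {I : Fin k → M} {J : Fin k → N}
    (h : ∀ a b, I a < I b ↔ J a < J b) : IsSorted σ I ↔ IsSorted σ J := by
  unfold IsSorted
  constructor <;> intro hs a b
  · rw [← h]; exact hs a b
  · rw [h]; exact hs a b

private lemma le_of_rel {m : ℕ} {f g : Fin m → Fin m}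
    (hfg : ∀ a b, f a < f b ↔ g a < g b)
    (hf : ∃ r : ℕ, ∀ j : Fin m, j ∈ Set.range f ↔ (j : ℕ) < r) :
    ∀ i, (f i : ℕ) ≤ (g i : ℕ) := by
  obtain ⟨r, hr⟩ := hf
  intro i
  generalize hv : (g i : ℕ) = v
  induction v using Nat.strong_induction_on generalizing i with
  | _ v IH =>
    subst hv
    by_contra h
    push_neg at h
    have hfi : (f i : ℕ) < r := (hr (f i)).mp ⟨i, rfl⟩
    have hgi : ((g i : Fin m) : ℕ) < r := lt_trans h hfi
    obtain ⟨j, hj⟩ := (hr (g i)).mpr hgi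
    have hfj : f j < f i := by
      rw [hj]
      exact h
    have hgj : g j < g i := (hfg j i).mp hfj
    have hle : (f j : ℕ) ≤ (g j : ℕ) := IH (g j : ℕ) hgj j rfl
    have : (f j : ℕ) = (g i : ℕ) := by rw [hj]
    omega

private lemma eq_of_rel {m : ℕ} {f g : Fin m → Fin m}
    (hfg : ∀ a b, f a < f b ↔ g a < g b)
    (hf : ∃ r : ℕ, ∀ j : Fin m, j ∈ Set.range f ↔ (j : ℕ) < r)
    (hg : ∃ r : ℕ, ∀ j : Fin m, j ∈ Set.range g ↔ (j : ℕ) < r) : f = g := by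
  funext i
  exact Fin.ext (le_antisymm (le_of_rel hfg hf i)
    (le_of_rel (fun a b => (hfg a b).symm) hg i))

private lemma exists_std {m n : ℕ} (hm : 0 < m) (K : Fin m → Fin n) :
    ∃ γ : Fin m → Fin m, (∀ a b, K a < K b ↔ γ a < γ b) ∧
      ∃ r : ℕ, ∀ j : Fin m, j ∈ Set.range γ ↔ (j : ℕ) < r := by
  classical
  set s : Finset (Fin n) := Finset.univ.image K with hs
  have hmem : ∀ i, K i ∈ s := fun i => Finset.mem_image_of_mem K (Finset.mem_univ i)
  have hcard : ∀ i, (s.filter (· < K i)).card < m := by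
    intro i
    have h1 : (s.filter (· < K i)) ⊂ s := by
      refine Finset.ssubset_iff_of_subset (Finset.filter_subset _ _) |>.mpr ?_
      exact ⟨K i, hmem i, by simp⟩
    calc (s.filter (· < K i)).card < s.card := Finset.card_lt_card h1
      _ ≤ (Finset.univ : Finset (Fin m)).card := by
          rw [hs]; exact Finset.card_image_le.trans (by simp)
      _ = m := by simp
  have mono : ∀ a b : Fin m, K a < K b →
      (s.filter (· < K a)).card < (s.filter (· < K b)).card := by
    intro a b hab
    apply Finset.card_lt_card
    have hsub : s.filter (· < K a) ⊆ s.filter (· < K b) := by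
      intro x hx
      rw [Finset.mem_filter] at hx ⊢
      exact ⟨hx.1, lt_trans hx.2 hab⟩
    refine Finset.ssubset_iff_of_subset hsub |>.mpr ?_
    exact ⟨K a, Finset.mem_filter.mpr ⟨hmem a, hab⟩, by simp⟩
  have iffKγ : ∀ a b : Fin m, K a < K b ↔
      (s.filter (· < K a)).card < (s.filter (· < K b)).card := by
    intro a b
    refine ⟨mono a b, fun h => ?_⟩
    rcases lt_trichotomy (K a) (K b) with h' | h' | h'
    · exact h'
    · rw [h'] at h; exact absurd h (lt_irrefl _)
    · exact absurd (mono b a h') (by omega)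
  refine ⟨fun i => ⟨(s.filter (· < K i)).card, hcard i⟩, ?_, ?_⟩
  · intro a b
    rw [iffKγ a b, Fin.lt_def]
  · refine ⟨s.card, fun j => ?_⟩
    constructor
    · rintro ⟨i, rfl⟩
      exact Finset.card_lt_card (Finset.ssubset_iff_of_subset
        (Finset.filter_subset _ _) |>.mpr ⟨K i, hmem i, by simp⟩)
    · intro hj
      have e := s.orderIsoOfFin rfl
      have hvs : ((e ⟨(j : ℕ), hj⟩ : s) : Fin n) ∈ s := (e ⟨(j : ℕ), hj⟩).2
      obtain ⟨i, -, hi⟩ := Finset.mem_image.mp hvs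
      refine ⟨i, ?_⟩
      have hfi : s.filter (· < K i) =
          (Finset.univ.filter (fun i' : Fin s.card => (i' : ℕ) < (j : ℕ))).image
            (fun i' => (e i' : Fin n)) := by
        ext x
        simp only [Finset.mem_filter, Finset.mem_image, Finset.mem_univ, true_and]
        constructor
        · rintro ⟨hxs, hx⟩
          refine ⟨e.symm ⟨x, hxs⟩, ?_, by simp⟩
          have : e (e.symm ⟨x, hxs⟩) < e ⟨(j : ℕ), hj⟩ := by
            rw [OrderIso.apply_symm_apply]
            exact Subtype.coe_lt_coe.mp (hi ▸ hx)
          exact e.lt_iff_lt.mp this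
        · rintro ⟨i', hi', rfl⟩
          refine ⟨(e i').2, ?_⟩
          have : e i' < e ⟨(j : ℕ), hj⟩ := e.lt_iff_lt.mpr hi'
          rw [hi]
          exact Subtype.coe_lt_coe.mpr this
      have hcardj : (s.filter (· < K i)).card = (j : ℕ) := by
        rw [hfi, Finset.card_image_of_injective _
          (fun a b hab => e.injective (Subtype.ext hab))]
        have heq : (Finset.univ.filter (fun i' : Fin s.card => (i' : ℕ) < (j : ℕ)))
            = Finset.Iio (⟨(j : ℕ), hj⟩ : Fin s.card) := by
          ext x
          simp [Fin.lt_def]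
        rw [heq, Fin.card_Iio]
      exact Fin.ext hcardj

/-- A word `K` of length `k₁ + k₂` is `α`-sorted on the first `k₁`
coordinates and `β`-sorted on the last `k₂` coordinates if and only if there is exactly
one admissible `γ` such that `K` is `γ`-sorted (the shuffle lemma
`E_α ⊗ E_β = Σ_γ E_γ`). -/
theorem shuffle_lemma (k₁ k₂ n : ℕ) (h₁ : 0 < k₁) (h₂ : 0 < k₂) (hn : 0 < n)
    (α : Fin k₁ → Fin k₁) (β : Fin k₂ → Fin k₂) (K : Fin (k₁ + k₂) → Fin n) :
    (IsSorted α (fun a => K (Fin.castAdd k₂ a)) ∧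
        IsSorted β (fun b => K (Fin.natAdd k₁ b))) ↔
      (∃! γ : Fin (k₁ + k₂) → Fin (k₁ + k₂),
        Admissible k₁ k₂ α β γ ∧ IsSorted γ K) := by
  constructor
  · rintro ⟨hα, hβ⟩
    obtain ⟨γ, hγ, hrange⟩ := exists_std (Nat.add_pos_left h₁ k₂) K
    refine ⟨γ, ⟨⟨?_, ?_, hrange⟩, fun a b => hγ a b⟩, ?_⟩
    · exact (isSorted_congr α (fun a b => hγ _ _)).mp hα
    · exact (isSorted_congr β (fun a b => hγ _ _)).mp hβ
    · rintro γ' ⟨⟨-, -, hrange'⟩, hsort'⟩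
      exact eq_of_rel (fun a b => (hsort' a b).symm.trans (hγ a b)) hrange' hrange
  · rintro ⟨γ, ⟨⟨hα, hβ, -⟩, hsort⟩, -⟩
    constructor
    · exact (isSorted_congr α (fun a b => hsort _ _)).mpr hα
    · exact (isSorted_congr β (fun a b => hsort _ _)).mpr hβ
end
end

section
/- Fix a positive integer k and functions α, β : Fin k → Fin k. There exists an assignment of a complex number a_P to each set partition P of Fin k ⊕ Fin k, independent of n, such that for every positive integer n, the averaged operator (1/n!) · Σ_{x ∈ S_n} ρ(x)⁻¹ ∘ (E_α ∘ E_β^T) ∘ ρ(x) on W_{k,n} equals Σ_P a_P · T_P, where the sum is over all set partitions P of Fin k ⊕ Fin k. -/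
/-!
Formalization of statements from "Stable characters from permutation patterns"
by C. Gaetz and C. Ryba.
-/

open scoped Classical

noncomputable section

/-!
The `(J, I)` entry of the averaged operator is the proportion of `x ∈ S_n` for which `x ∘ J` is
`α`-sorted and `x ∘ I` is `β`-sorted. It depends only on the partition `Q = ker ℓ_{J,I}`: the maps
`x ∘ ℓ` run over the injections of the blocks of `Q` into `Fin n`, each one `(n - |Q|)!` times, and
an injection factors uniquely as an `|Q|`-subset of `Fin n` followed by an ordering of the blocks,
only the ordering mattering for sortedness. So the entry is the proportion `c(Q)` of good orderings
of the blocks, whatever `n` is. As `C_P(J, I) = [P ≤ Q]`, it remains to solve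
`∑_{P ≤ Q} a_P = c(Q)`, a unitriangular system over the finite lattice of partitions.
-/

open Finset Function

section PermCounting

variable {α T : Type*} [Fintype α] [DecidableEq α] [Fintype T] {u : T → α}

lemma card_filter_perm_comp_eq (hu : Injective u) {j : T → α} (hj : Injective j) :
    #{x : Equiv.Perm α | ⇑x ∘ u = j} = (Fintype.card α - Fintype.card T).factorial := by
  let e₀ : Set.range u ≃ Set.range j :=
    (Equiv.ofInjective u hu).symm.trans (Equiv.ofInjective j hj)
  have hext : ∀ x : Equiv.Perm α, ⇑x ∘ u = j ↔ ∀ y : Set.range u, x y = e₀ y := by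
    intro x
    refine ⟨?_, fun h => funext fun t => by simpa [e₀] using h ⟨u t, t, rfl⟩⟩
    rintro rfl ⟨-, t, rfl⟩
    simp [e₀, Equiv.ofInjective_symm_apply]
  have hcompl : ∀ v : T → α, Injective v →
      Fintype.card ((Set.range v)ᶜ : Set α) = Fintype.card α - Fintype.card T := fun v hv => by
    rw [Fintype.card_compl_set, Set.card_range_of_injective hv]
  rw [← Fintype.card_subtype, Fintype.card_congr
    ((Equiv.subtypeEquivRight hext).trans (Equiv.Set.compl e₀)), Fintype.card_equiv
    (Fintype.equivOfCardEq ((hcompl u hu).trans (hcompl j hj).symm)), hcompl u hu]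

lemma card_filter_perm_comp [DecidableEq T] (hu : Injective u) (p : (T → α) → Prop) :
    #{x : Equiv.Perm α | p (⇑x ∘ u)} =
      (Fintype.card α - Fintype.card T).factorial * #{j : T → α | Injective j ∧ p j} := by
  rw [card_eq_sum_card_fiberwise (f := fun x : Equiv.Perm α => ⇑x ∘ u)
    (t := {j : T → α | Injective j ∧ p j}), mul_comm, ← smul_eq_mul, ← sum_const]
  · refine sum_congr rfl fun j hj => ?_
    obtain ⟨hj, hpj⟩ := (mem_filter.mp hj).2
    rw [← card_filter_perm_comp_eq hu hj]
    congr 1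
    ext x
    simp only [mem_filter, mem_univ, true_and, and_iff_right_iff_imp]
    rintro rfl
    exact hpj
  · intro x hx
    simp only [coe_filter, mem_univ, true_and, Set.mem_ofPred_eq] at hx ⊢
    exact ⟨x.injective.comp hu, hx⟩

end PermCounting

section OrderFactorization

variable {α T : Type*} [LinearOrder α] {m : ℕ}

lemma eq_and_eq_of_orderEmbOfFin_comp_eq {A B : Finset α} {hA : #A = m} {hB : #B = m}
    {e e' : T ≃ Fin m} (h : ⇑(A.orderEmbOfFin hA) ∘ e = ⇑(B.orderEmbOfFin hB) ∘ e') :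
    A = B ∧ e = e' := by
  have hAB : A = B := by
    apply coe_injective
    rw [← range_orderEmbOfFin A hA, ← range_orderEmbOfFin B hB, ← e.surjective.range_comp,
      h, e'.surjective.range_comp]
  subst hAB
  exact ⟨rfl, Equiv.ext fun t => (A.orderEmbOfFin hA).injective (congrFun h t)⟩

lemma exists_orderEmbOfFin_comp_eq [Fintype T] {j : T → α} (hj : Injective j) :
    ∃ (A : Finset α) (hA : #A = Fintype.card T) (e : T ≃ Fin (Fintype.card T)),
      ⇑(A.orderEmbOfFin hA) ∘ e = j := by
  have hA : #(univ.image j) = Fintype.card T := card_image_of_injective _ hj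
  let e : T ≃ Fin (Fintype.card T) :=
    (Equiv.ofInjective j hj).trans <| (Equiv.setCongr (by simp)).trans
      ((univ.image j).orderIsoOfFin hA).symm.toEquiv
  refine ⟨univ.image j, hA, e, funext fun t => ?_⟩
  simp only [e, comp_apply, Equiv.trans_apply, Equiv.ofInjective_apply, Equiv.setCongr_apply,
    OrderIso.coe_toEquiv, ← coe_orderIsoOfFin_apply, OrderIso.apply_symm_apply]

end OrderFactorization

lemma card_filter_injective_of_orderInvariant {n : ℕ} {T : Type*} [Fintype T] [DecidableEq T]
    (G : (T → Fin n) → Prop) (G' : (T ≃ Fin (Fintype.card T)) → Prop)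
    (hG : ∀ (e : T ≃ Fin (Fintype.card T)) (f : Fin (Fintype.card T) → Fin n), StrictMono f →
      (G (f ∘ e) ↔ G' e)) :
    #{j : T → Fin n | Injective j ∧ G j} = n.choose (Fintype.card T) * #{e | G' e} := by
  let Φ : {A : Finset (Fin n) // #A = Fintype.card T} × {e // G' e} →
      {j : T → Fin n // Injective j ∧ G j} := fun ⟨⟨A, hA⟩, ⟨e, he⟩⟩ =>
    ⟨A.orderEmbOfFin hA ∘ e, (A.orderEmbOfFin hA).injective.comp e.injective,
      (hG e _ (A.orderEmbOfFin hA).strictMono).mpr he⟩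
  have hΦ : Bijective Φ := by
    refine ⟨fun ⟨⟨A, hA⟩, ⟨e, he⟩⟩ ⟨⟨B, hB⟩, ⟨e', he'⟩⟩ h => ?_, fun ⟨j, hj, hGj⟩ => ?_⟩
    · obtain ⟨rfl, rfl⟩ := eq_and_eq_of_orderEmbOfFin_comp_eq (congrArg Subtype.val h)
      rfl
    · obtain ⟨A, hA, e, rfl⟩ := exists_orderEmbOfFin_comp_eq hj
      exact ⟨⟨⟨A, hA⟩, e, (hG e _ (A.orderEmbOfFin hA).strictMono).mp hGj⟩, rfl⟩
  rw [← Fintype.card_subtype, ← Fintype.card_congr (Equiv.ofBijective Φ hΦ),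
    Fintype.card_prod, Fintype.card_finset_len, Fintype.card_fin, Fintype.card_subtype]

lemma card_filter_perm_comp_mul_factorial {n : ℕ} {T : Type*} [Fintype T] [DecidableEq T]
    {u : T → Fin n} (hu : Injective u) (G : (T → Fin n) → Prop)
    (G' : (T ≃ Fin (Fintype.card T)) → Prop)
    (hG : ∀ (e : T ≃ Fin (Fintype.card T)) (f : Fin (Fintype.card T) → Fin n), StrictMono f →
      (G (f ∘ e) ↔ G' e)) :
    #{x : Equiv.Perm (Fin n) | G (x ∘ u)} * (Fintype.card T).factorial =
      n.factorial * #{e | G' e} := by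
  have hT : Fintype.card T ≤ n := by simpa using Fintype.card_le_of_injective u hu
  rw [card_filter_perm_comp hu, card_filter_injective_of_orderInvariant G G' hG, Fintype.card_fin,
    ← Nat.choose_mul_factorial_mul_factorial hT]
  ring

def patternDensity {k : ℕ} (α β : Fin k → Fin k) (Q : Setoid (Fin k ⊕ Fin k)) : ℂ :=
  #{e : Quotient Q ≃ Fin (Fintype.card (Quotient Q)) |
      IsSorted α (e ∘ Quotient.mk Q ∘ Sum.inl) ∧ IsSorted β (e ∘ Quotient.mk Q ∘ Sum.inr)} /
    (Fintype.card (Quotient Q)).factorial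

lemma isSorted_strictMono_comp_iff {k : ℕ} {M N : Type*} [LinearOrder M] [LinearOrder N]
    {f : M → N} (hf : StrictMono f) (σ : Fin k → Fin k) (I : Fin k → M) :
    IsSorted σ (f ∘ I) ↔ IsSorted σ I := by
  simp only [IsSorted, comp_apply, hf.lt_iff_lt]

lemma inv_factorial_mul_card_sorted_eq_patternDensity {k n : ℕ} (α β : Fin k → Fin k)
    (J I : Fin k → Fin n) :
    (n.factorial : ℂ)⁻¹ * #{x : Equiv.Perm (Fin n) | IsSorted α (x ∘ J) ∧ IsSorted β (x ∘ I)} =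
      patternDensity α β (Setoid.ker (label J I)) := by
  set Q := Setoid.ker (label J I)
  let sorted {M : Type} [LinearOrder M] (j : Quotient Q → M) : Prop :=
    IsSorted α (j ∘ Quotient.mk Q ∘ Sum.inl) ∧ IsSorted β (j ∘ Quotient.mk Q ∘ Sum.inr)
  have hcount := card_filter_perm_comp_mul_factorial (Setoid.kerLift_injective (label J I))
    sorted (fun e => sorted e)
    fun e f hf => by simp only [sorted, comp_assoc, isSorted_strictMono_comp_iff hf]
  have hfac (m : ℕ) : (m.factorial : ℂ) ≠ 0 := Nat.cast_ne_zero.mpr m.factorial_ne_zero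
  rw [patternDensity, eq_div_iff (hfac _), inv_mul_eq_div, div_mul_eq_mul_div,
    div_eq_iff (hfac _), mul_comm _ (n.factorial : ℂ)]
  norm_cast
  convert hcount using 4
  exact Iff.rfl

lemma exists_sum_filter_le_eq {K P : Type*} [Field K] [Fintype P] [PartialOrder P] (c : P → K) :
    ∃ a : P → K, ∀ Q, ∑ R ∈ {R | R ≤ Q}, a R = c Q := by
  let L : (P → K) →ₗ[K] P → K :=
    { toFun := fun a Q => ∑ R ∈ {R | R ≤ Q}, a R
      map_add' := fun a b => funext fun Q => sum_add_distrib
      map_smul' := fun t a => funext fun Q => (mul_sum ..).symm }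
  have hL : Injective L := by
    refine (injective_iff_map_eq_zero L).mpr fun a ha => funext fun Q => ?_
    induction Q using WellFoundedLT.induction with
    | ind Q ih =>
      have hQ : ∑ R ∈ {R | R ≤ Q}, a R = 0 := congrFun ha Q
      rwa [show univ.filter (· ≤ Q) = insert Q (univ.filter (· < Q)) by
          ext; simp [le_iff_eq_or_lt],
        sum_insert (by simp), sum_eq_zero fun R hR => ih R (mem_filter.mp hR).2, add_zero] at hQ
  obtain ⟨a, ha⟩ := LinearMap.injective_iff_surjective.mp hL c
  exact ⟨a, congrFun ha⟩

lemma CP_eq_ite_le_ker {k n : ℕ} (P : Setoid (Fin k ⊕ Fin k)) (J I : Fin k → Fin n) :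
    CP P J I = if P ≤ Setoid.ker (label J I) then 1 else 0 := by
  simp only [CP, Setoid.le_def, Setoid.ker_def]

lemma TP_eq_toLin' (k n : ℕ) (P : Setoid (Fin k ⊕ Fin k)) :
    TP k n P = Matrix.toLin' (Matrix.of fun J I => CP P J I) :=
  (Matrix.toLin'_apply' _).symm

lemma rho_inv_comp_comp_rho_eq_toLin' (k n : ℕ) (α β : Fin k → Fin k) (x : Equiv.Perm (Fin n)) :
    rho k n x⁻¹ ∘ₗ (Esig k n α ∘ₗ EsigT k n β) ∘ₗ rho k n x =
      Matrix.toLin' (Matrix.of fun J I =>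
        if IsSorted α (x ∘ J) ∧ IsSorted β (x ∘ I) then 1 else 0) := by
  refine LinearMap.ext fun f => funext fun J => ?_
  simp only [LinearMap.comp_apply, rho, Esig, EsigT, LinearMap.coe_mk, AddHom.coe_mk, inv_inv,
    Matrix.toLin'_apply, Matrix.mulVec, dotProduct, Matrix.of_apply, ite_and, ite_mul, one_mul,
    zero_mul]
  split_ifs
  · rw [sum_filter]
    refine (Fintype.sum_equiv ((Equiv.refl (Fin k)).arrowCongr x) _ _ fun I => ?_).symm
    change _ = if IsSorted β (x ∘ I) then f (x.symm ∘ x ∘ I) else 0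
    rw [← comp_assoc, Equiv.symm_comp_self, id_comp]
  · simp

lemma average_rho_conj_eq_toLin' (k n : ℕ) (α β : Fin k → Fin k) :
    (n.factorial : ℂ)⁻¹ • ∑ x : Equiv.Perm (Fin n),
        rho k n x⁻¹ ∘ₗ (Esig k n α ∘ₗ EsigT k n β) ∘ₗ rho k n x =
      Matrix.toLin' (Matrix.of fun J I => (n.factorial : ℂ)⁻¹ *
        #{x : Equiv.Perm (Fin n) | IsSorted α (x ∘ J) ∧ IsSorted β (x ∘ I)}) := by
  simp_rw [rho_inv_comp_comp_rho_eq_toLin', ← map_sum, ← map_smul]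
  congr 1
  ext J I
  simp [Matrix.sum_apply, sum_boole]

theorem averaging_theorem_general (k : ℕ) (α β : Fin k → Fin k) :
    ∃ a : Setoid (Fin k ⊕ Fin k) → ℂ, ∀ n : ℕ, 0 < n →
      ((n.factorial : ℂ)⁻¹ • ∑ x : Equiv.Perm (Fin n),
          (rho k n x⁻¹) ∘ₗ ((Esig k n α) ∘ₗ (EsigT k n β)) ∘ₗ (rho k n x)) =
        ∑ P : Setoid (Fin k ⊕ Fin k), a P • TP k n P := by
  obtain ⟨a, ha⟩ := exists_sum_filter_le_eq (patternDensity α β)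
  refine ⟨a, fun n _ => ?_⟩
  simp_rw [average_rho_conj_eq_toLin', TP_eq_toLin', ← map_smul, ← map_sum]
  congr 1
  ext J I
  simp only [Matrix.of_apply, Matrix.sum_apply, Matrix.smul_apply, CP_eq_ite_le_ker, smul_eq_mul,
    mul_ite, mul_one, mul_zero, ← sum_filter]
  rw [inv_factorial_mul_card_sorted_eq_patternDensity, ha]

/-- For fixed `α, β : Fin k → Fin k` there are coefficients `a_P`,
independent of `n`, such that for every `n` the `S_n`-average of
`ρ(x)⁻¹ ∘ (E_α ∘ E_β^T) ∘ ρ(x)` equals `Σ_P a_P · T_P`. -/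
theorem averaging_theorem (k : ℕ) (hk : 0 < k) (α β : Fin k → Fin k) :
    ∃ a : Setoid (Fin k ⊕ Fin k) → ℂ, ∀ n : ℕ, 0 < n →
      ((n.factorial : ℂ)⁻¹ • ∑ x : Equiv.Perm (Fin n),
          (rho k n x⁻¹) ∘ₗ ((Esig k n α) ∘ₗ (EsigT k n β)) ∘ₗ (rho k n x)) =
        ∑ P : Setoid (Fin k ⊕ Fin k), a P • TP k n P :=
  averaging_theorem_general k α β
end
end

section
/- Fix a positive integer k, functions α, β : Fin k → Fin k, a positive integer n, and words I, J : Fin k → Fin n. Let L ⊆ Fin n be the union of the ranges of I and J, and let S_L be the subgroup of S_n consisting of permutations fixing every element outside L. Then (1/n!) · |{x ∈ S_n : x ∘ I is β-sorted and x ∘ J is α-sorted}| = (1/|L|!) · |{x ∈ S_L : x ∘ I is β-sorted and x ∘ J is α-sorted}|. -/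
/-!
Formalization of statements from "Stable characters from permutation patterns"
by C. Gaetz and C. Ryba.
-/

open scoped Classical

noncomputable section

section SortingAux
open Equiv Set
variable {n : ℕ}

lemma strictMonoOn_perm_eq (L : Set (Fin n)) (m m' : Perm (Fin n))
    (hm : StrictMonoOn m L) (hm' : StrictMonoOn m' L)
    (him : m '' L = m' '' L) (hc : ∀ i ∉ L, m i = m' i) : m = m' := by
  have hfun : ∀ a ∈ L, m a = m' a := by
    set T : Set (Fin n) := m '' L with hT
    set f : ↥L ≃o ↥T := StrictMono.orderIsoOfSurjective
      (fun a => (⟨m a, mem_image_of_mem m a.2⟩ : ↥T))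
      (fun a b hab => by exact hm a.2 b.2 hab)
      (by rintro ⟨t, a, ha, rfl⟩; exact ⟨⟨a, ha⟩, rfl⟩) with hf
    set f' : ↥L ≃o ↥T := StrictMono.orderIsoOfSurjective
      (fun a => (⟨m' a, him ▸ mem_image_of_mem m' a.2⟩ : ↥T))
      (fun a b hab => by exact hm' a.2 b.2 hab)
      (by rintro ⟨t, ht⟩; rw [him] at ht; obtain ⟨a, ha, rfl⟩ := ht
          exact ⟨⟨a, ha⟩, rfl⟩) with hf'
    have hff : f = f' := Subsingleton.elim _ _
    intro a ha
    have h2 := congrArg (fun g : ↥L ≃o ↥T => ((g ⟨a, ha⟩ : ↥T) : Fin n)) hff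
    simp only [hf, hf', StrictMono.coe_orderIsoOfSurjective] at h2
    exact h2
  refine Equiv.ext fun i => ?_
  by_cases hi : i ∈ L
  · exact hfun i hi
  · exact hc i hi

lemma perm_decomp (L : Set (Fin n)) (x : Perm (Fin n)) :
    ∃ m s : Perm (Fin n), StrictMonoOn (⇑m) L ∧ (∀ i ∉ L, s i = i) ∧ m * s = x := by
  set T : Set (Fin n) := (⇑x) '' L with hT
  have hcard : Fintype.card ↥T = Fintype.card ↥L := by
    rw [← Nat.card_eq_fintype_card, ← Nat.card_eq_fintype_card, hT,
      Nat.card_image_of_injective x.injective]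
  set f : Fin (Fintype.card ↥L) ≃o ↥L := monoEquivOfFin ↥L rfl with hfdef
  set g : Fin (Fintype.card ↥L) ≃o ↥T := monoEquivOfFin ↥T hcard with hgdef
  set iso : ↥L ≃o ↥T := f.symm.trans g with hiso
  have hcompl : (⇑x) '' Lᶜ = Tᶜ := by
    rw [hT, Set.image_compl_eq x.bijective]
  set xc : ↥(Lᶜ) ≃ ↥(Tᶜ) := (Equiv.Set.image (⇑x) Lᶜ x.injective).trans (Equiv.setCongr hcompl)
    with hxc
  set m : Perm (Fin n) :=
    ((Equiv.Set.sumCompl L).symm.trans ((iso.toEquiv.sumCongr xc).trans (Equiv.Set.sumCompl T)))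
    with hm
  have hmem : ∀ a (ha : a ∈ L), m a = (iso ⟨a, ha⟩ : Fin n) := by
    intro a ha
    simp [hm, Equiv.Set.sumCompl_symm_apply_of_mem ha]
  have hnot : ∀ a, a ∉ L → m a = x a := by
    intro a ha
    simp [hm, Equiv.Set.sumCompl_symm_apply_of_notMem ha, hxc, Equiv.Set.image,
      Equiv.Set.imageOfInjOn]
  refine ⟨m, m⁻¹ * x, ?_, ?_, by group⟩
  · intro a ha b hb hab
    rw [hmem a ha, hmem b hb]
    exact_mod_cast iso.strictMono (by exact_mod_cast hab)
  · intro i hi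
    simp [← hnot i hi]

lemma fix_compl_maps_to {L : Set (Fin n)} {s : Perm (Fin n)} (hs : ∀ i ∉ L, s i = i) :
    ∀ i ∈ L, s i ∈ L := by
  intro i hi
  by_contra h
  have h2 : s (s i) = s i := hs (s i) h
  have : s i = i := s.injective h2
  rw [this] at h; exact h hi

lemma fix_compl_inv {L : Set (Fin n)} {s : Perm (Fin n)} (hs : ∀ i ∉ L, s i = i) :
    ∀ i ∉ L, s⁻¹ i = i := by
  intro i hi
  conv_lhs => rw [← hs i hi]
  simp

lemma fix_compl_image {L : Set (Fin n)} {s : Perm (Fin n)} (hs : ∀ i ∉ L, s i = i) :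
    (⇑s) '' L = L := by
  apply Set.Subset.antisymm
  · rintro _ ⟨i, hi, rfl⟩; exact fix_compl_maps_to hs i hi
  · intro i hi
    refine ⟨s⁻¹ i, ?_, by simp⟩
    exact fix_compl_maps_to (fix_compl_inv hs) i hi

lemma isSorted_mul_iff {k : ℕ} (σ : Fin k → Fin k) (L : Set (Fin n)) (I : Fin k → Fin n)
    (hI : ∀ a, I a ∈ L) {m s : Perm (Fin n)} (hm : StrictMonoOn (⇑m) L)
    (hs : ∀ i ∉ L, s i = i) :
    IsSorted σ (⇑(m * s) ∘ I) ↔ IsSorted σ (⇑s ∘ I) := by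
  have h : ∀ a, s (I a) ∈ L := fun a => fix_compl_maps_to hs _ (hI a)
  unfold IsSorted
  simp only [Function.comp, Perm.mul_apply]
  constructor
  · intro H a b; rw [← H a b, hm.lt_iff_lt (h a) (h b)]
  · intro H a b; rw [hm.lt_iff_lt (h a) (h b), H]

lemma decomp_unique (L : Set (Fin n)) {m₁ m₂ s₁ s₂ : Perm (Fin n)}
    (hm₁ : StrictMonoOn (⇑m₁) L) (hm₂ : StrictMonoOn (⇑m₂) L)
    (hs₁ : ∀ i ∉ L, s₁ i = i) (hs₂ : ∀ i ∉ L, s₂ i = i)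
    (h : m₁ * s₁ = m₂ * s₂) : m₁ = m₂ ∧ s₁ = s₂ := by
  have him : (⇑m₁) '' L = (⇑m₂) '' L := by
    calc (⇑m₁) '' L = (⇑m₁) '' ((⇑s₁) '' L) := by rw [fix_compl_image hs₁]
    _ = (⇑(m₁ * s₁)) '' L := by rw [Set.image_image]; rfl
    _ = (⇑(m₂ * s₂)) '' L := by rw [h]
    _ = (⇑m₂) '' ((⇑s₂) '' L) := by rw [Set.image_image]; rfl
    _ = (⇑m₂) '' L := by rw [fix_compl_image hs₂]
  have hc : ∀ i ∉ L, m₁ i = m₂ i := by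
    intro i hi
    have h2 : m₁ (s₁ i) = m₂ (s₂ i) := by
      have := congrArg (fun g : Perm (Fin n) => g i) h
      simpa using this
    rwa [hs₁ i hi, hs₂ i hi] at h2
  have hmm : m₁ = m₂ := strictMonoOn_perm_eq L m₁ m₂ hm₁ hm₂ him hc
  refine ⟨hmm, ?_⟩
  rw [hmm] at h
  exact mul_left_cancel h

end SortingAux

/-- The proportion of `x ∈ S_n` such that `x ∘ I` is `β`-sorted and
`x ∘ J` is `α`-sorted equals the corresponding proportion within the subgroup `S_L` of
permutations fixing every element outside `L = range I ∪ range J`. -/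
theorem sorting_proportion (k n : ℕ) (hk : 0 < k) (hn : 0 < n)
    (α β : Fin k → Fin k) (I J : Fin k → Fin n) :
    (Nat.card {x : Equiv.Perm (Fin n) //
        IsSorted β (⇑x ∘ I) ∧ IsSorted α (⇑x ∘ J)} : ℚ) / (n.factorial : ℚ) =
      (Nat.card {x : Equiv.Perm (Fin n) //
          (∀ i : Fin n, i ∉ Set.range I ∪ Set.range J → x i = i) ∧
          IsSorted β (⇑x ∘ I) ∧ IsSorted α (⇑x ∘ J)} : ℚ) /
        ((Nat.card ↥(Set.range I ∪ Set.range J)).factorial : ℚ) := by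
  classical
  set L : Set (Fin n) := Set.range I ∪ Set.range J with hL
  have hI : ∀ a, I a ∈ L := fun a => Or.inl ⟨a, rfl⟩
  have hJ : ∀ a, J a ∈ L := fun a => Or.inr ⟨a, rfl⟩
  have hPiff : ∀ (m s : Equiv.Perm (Fin n)), StrictMonoOn (⇑m) L → (∀ i ∉ L, s i = i) →
      ((IsSorted β (⇑(m * s) ∘ I) ∧ IsSorted α (⇑(m * s) ∘ J)) ↔
        (IsSorted β (⇑s ∘ I) ∧ IsSorted α (⇑s ∘ J))) := fun m s hm hs => by
    rw [isSorted_mul_iff β L I hI hm hs, isSorted_mul_iff α L J hJ hm hs]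
  have hb1 : Nat.card ({m : Equiv.Perm (Fin n) // StrictMonoOn (⇑m) L} ×
      {s : Equiv.Perm (Fin n) // (∀ i : Fin n, i ∉ L → s i = i) ∧
        IsSorted β (⇑s ∘ I) ∧ IsSorted α (⇑s ∘ J)}) =
      Nat.card {x : Equiv.Perm (Fin n) // IsSorted β (⇑x ∘ I) ∧ IsSorted α (⇑x ∘ J)} := by
    apply Nat.card_eq_of_bijective
      (fun p => ⟨p.1.1 * p.2.1, (hPiff _ _ p.1.2 p.2.2.1).mpr p.2.2.2⟩)
    constructor
    · rintro ⟨⟨m₁, hm₁⟩, ⟨s₁, hs₁⟩⟩ ⟨⟨m₂, hm₂⟩, ⟨s₂, hs₂⟩⟩ h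
      have := decomp_unique L hm₁ hm₂ hs₁.1 hs₂.1 (Subtype.ext_iff.mp h)
      simp only [Prod.ext_iff, Subtype.ext_iff, this.1, this.2, and_self]
    · rintro ⟨x, hx⟩
      obtain ⟨m, s, hm, hs, hms⟩ := perm_decomp L x
      refine ⟨⟨⟨m, hm⟩, ⟨s, hs, ?_⟩⟩, Subtype.ext hms⟩
      exact (hPiff m s hm hs).mp (hms ▸ hx)
  have hb2 : Nat.card ({m : Equiv.Perm (Fin n) // StrictMonoOn (⇑m) L} ×
      {s : Equiv.Perm (Fin n) // ∀ i : Fin n, i ∉ L → s i = i}) =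
      Nat.card (Equiv.Perm (Fin n)) := by
    apply Nat.card_eq_of_bijective (fun p => p.1.1 * p.2.1)
    constructor
    · rintro ⟨⟨m₁, hm₁⟩, ⟨s₁, hs₁⟩⟩ ⟨⟨m₂, hm₂⟩, ⟨s₂, hs₂⟩⟩ h
      have := decomp_unique L hm₁ hm₂ hs₁ hs₂ h
      simp only [Prod.ext_iff, Subtype.ext_iff, this.1, this.2, and_self]
    · intro x
      obtain ⟨m, s, hm, hs, hms⟩ := perm_decomp L x
      exact ⟨⟨⟨m, hm⟩, ⟨s, hs⟩⟩, hms⟩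
  rw [Nat.card_prod] at hb1 hb2
  have hSL : Nat.card {s : Equiv.Perm (Fin n) // ∀ i : Fin n, i ∉ L → s i = i} =
      (Nat.card ↥L).factorial := by
    rw [← Nat.card_congr (Equiv.Perm.subtypeEquivSubtypePerm (· ∈ L)),
      Nat.card_eq_fintype_card, Fintype.card_perm, Nat.card_eq_fintype_card]
  have hSn : Nat.card (Equiv.Perm (Fin n)) = n.factorial := by
    rw [Nat.card_eq_fintype_card, Fintype.card_perm, Fintype.card_fin]
  have hc0 : (Nat.card {m : Equiv.Perm (Fin n) // StrictMonoOn (⇑m) L} : ℚ) ≠ 0 := by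
    have : Nonempty {m : Equiv.Perm (Fin n) // StrictMonoOn (⇑m) L} :=
      ⟨⟨1, fun a _ b _ h => by simpa using h⟩⟩
    exact_mod_cast Nat.card_pos.ne'
  have key : (n.factorial : ℕ) =
      Nat.card {m : Equiv.Perm (Fin n) // StrictMonoOn (⇑m) L} * (Nat.card ↥L).factorial := by
    rw [← hSn, ← hb2, hSL]
  rw [← hb1, key]
  push_cast
  rw [mul_div_mul_left _ _ hc0]
end
end

section
/- For all positive integers k and n, every set partition P of Fin k ⊕ Fin k, and every g ∈ S_n, the operator T_P commutes with the action of g on W_{k,n}: ρ(g) ∘ T_P = T_P ∘ ρ(g). -/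
/-!
Formalization of statements from "Stable characters from permutation patterns"
by C. Gaetz and C. Ryba.
-/

open scoped Classical

noncomputable section

/-- Every operator `T_P` commutes with the `S_n`-action on `W_{k,n}`. -/
theorem TP_commutes (k n : ℕ) (hk : 0 < k) (hn : 0 < n)
    (P : Setoid (Fin k ⊕ Fin k)) (g : Equiv.Perm (Fin n)) :
    (rho k n g) ∘ₗ (TP k n P) = (TP k n P) ∘ₗ (rho k n g) := by
  apply LinearMap.ext; intro f
  funext J
  show ∑ I, CP P (⇑g⁻¹ ∘ J) I * f I = ∑ I, CP P J I * f (⇑g⁻¹ ∘ I)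
  rw [← Equiv.sum_comp (Equiv.arrowCongr (Equiv.refl (Fin k)) g)
    (fun I => CP P J I * f (⇑g⁻¹ ∘ I))]
  apply Finset.sum_congr rfl
  intro I _
  have h1 : ⇑g⁻¹ ∘ ((Equiv.arrowCongr (Equiv.refl (Fin k)) g) I) = I := by
    funext r; simp [Equiv.arrowCongr]
  rw [h1]
  congr 1
  unfold CP
  have h2 : label (⇑g⁻¹ ∘ J) I = ⇑g⁻¹ ∘ label J ((Equiv.arrowCongr (Equiv.refl (Fin k)) g) I) := by
    funext a; cases a <;> simp [label, Equiv.arrowCongr]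
  simp only [h2, Function.comp_apply, EmbeddingLike.apply_eq_iff_eq]
end
end
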